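/- arXiv:2407.03258 — 5 statements merged into one kernel-verified Lean document; each statement's English description precedes it below -/
import Mathlib

section
/- The spectral radius of the transfer matrix T is strictly less than 1; that is, every complex eigenvalue λ of T satisfies |λ| < 1. -/
open scoped BigOperators

/-- A step of a light path (in integer lattice coordinates): the vector from `p` to `q`
is cooriented with `(1,1)` or `(-1,1)`; the zero vector counts as cooriented with any vector. -/
def LightStep (p q : ℤ × ℤ) : Prop :=
  p.2 ≤ q.2 ∧ (q.1 - p.1 = q.2 - p.2 ∨ q.1 - p.1 = -(q.2 - p.2))

/-- A light path on the lattice `εℤ²` (recorded in integer coordinates `(x/ε, t/ε)`):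
a nonempty finite sequence of lattice points, each consecutive step cooriented with
`(1,1)` or `(-1,1)`, all points except possibly the first and last lying in the strip
`0 < x ≤ L` (in real coordinates). -/
def IsLightPath (L ε : ℝ) (s : List (ℤ × ℤ)) : Prop :=
  s ≠ [] ∧ s.Chain' LightStep ∧
    ∀ z ∈ s.dropLast.tail, 0 < ε * (z.1 : ℝ) ∧ ε * (z.1 : ℝ) ≤ L

/-- The number of scatterings of a path: points counted with repetitions,
excluding the first and the last. -/
def numScatter (s : List (ℤ × ℤ)) : ℕ := s.length - 2

/-- The last step of a path, if any: the pair (second-to-last point, last point). -/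
def lastStep (s : List (ℤ × ℤ)) : Option ((ℤ × ℤ) × (ℤ × ℤ)) :=
  match s.reverse with
  | q :: r :: _ => some (r, q)
  | _ => none

/-- The last step of `s` is nonzero and cooriented with `(sgn, 1)`. -/
def LastStepDir (sgn : ℤ) (s : List (ℤ × ℤ)) : Prop :=
  ∃ a b : ℤ × ℤ, lastStep s = some (a, b) ∧ a.2 < b.2 ∧ b.1 - a.1 = sgn * (b.2 - a.2)

/-- Light paths from `src` to `dst` whose last step is nonzero and cooriented with `(sgn,1)`. -/
def PathsDir (L ε : ℝ) (src dst : ℤ × ℤ) (sgn : ℤ) : Type :=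
  {s : List (ℤ × ℤ) // IsLightPath L ε s ∧ s.head? = some src ∧ s.getLast? = some dst ∧
    LastStepDir sgn s}

/-- All light paths from `src` to `dst`. -/
def PathsAll (L ε : ℝ) (src dst : ℤ × ℤ) : Type :=
  {s : List (ℤ × ℤ) // IsLightPath L ε s ∧ s.head? = some src ∧ s.getLast? = some dst}

/-- The inner sum `a_±(x,t;τ) = ∑_s (-imε)^{ℓ(s)}` over light paths from `(0,τ)` to `(x,t)`
whose last step is nonzero and cooriented with `(±1,1)`; integer lattice coordinates. -/
noncomputable def innerAmp (m L ε : ℝ) (sgn : ℤ) (x t τ : ℤ) : ℂ :=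
  ∑' s : PathsDir L ε (0, τ) (x, t) sgn, (-(Complex.I * m * ε)) ^ numScatter s.val

/-- The wave function `a_±(x,t) = ∑_{τ<t} e^{iωτ} a_±(x,t;τ)` (real time is `ε·t`). -/
noncomputable def waveFn (ω m L ε : ℝ) (sgn : ℤ) (x t : ℤ) : ℂ :=
  ∑' τ : {τ : ℤ // τ < t},
    Complex.exp (Complex.I * ω * (ε * (τ.val : ℤ))) * innerAmp m L ε sgn x t τ.val

/-- The reflection amplitude `a(ω,m,L,ε)`: sum over all light paths from `(0,τ)` to `(0,0)`,
`τ < 0`, of `e^{iωτ}(-imε)^{ℓ(s)}`. -/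
noncomputable def reflAmp (ω m L ε : ℝ) : ℂ :=
  ∑' τ : {τ : ℤ // τ < 0},
    Complex.exp (Complex.I * ω * (ε * (τ.val : ℤ))) *
      ∑' s : PathsAll L ε (0, τ.val) (0, 0), (-(Complex.I * m * ε)) ^ numScatter s.val

/-- The reflection probability `P(ω,m,L,ε) = |a(ω,m,L,ε)|²`. -/
noncomputable def reflProb (ω m L ε : ℝ) : ℝ := ‖reflAmp ω m L ε‖ ^ 2

/-- A checker path: a light path whose every step equals `(ε,ε)` or `(-ε,ε)`
(i.e. `(±1,1)` in integer coordinates). -/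
def IsCheckerPath (L ε : ℝ) (s : List (ℤ × ℤ)) : Prop :=
  IsLightPath L ε s ∧
    s.Chain' fun p q => q.2 - p.2 = 1 ∧ (q.1 - p.1 = 1 ∨ q.1 - p.1 = -1)

/-- The list of steps of a path. -/
def pathSteps (s : List (ℤ × ℤ)) : List (ℤ × ℤ) :=
  (s.zip s.tail).map fun pq => (pq.2.1 - pq.1.1, pq.2.2 - pq.1.2)

/-- The number of turns of a path: pairs of consecutive orthogonal steps. -/
def turns (s : List (ℤ × ℤ)) : ℕ :=
  (((pathSteps s).zip (pathSteps s).tail).filter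
    fun dd => dd.1.1 * dd.2.1 + dd.1.2 * dd.2.2 == 0).length

/-- Checker paths from `src` to `dst` whose last step equals `(sgn·ε, ε)`. -/
def CheckerDir (L ε : ℝ) (src dst : ℤ × ℤ) (sgn : ℤ) : Type :=
  {s : List (ℤ × ℤ) // IsCheckerPath L ε s ∧ s.head? = some src ∧ s.getLast? = some dst ∧
    LastStepDir sgn s}

/-- Membership in the space `V` of functions `a° = (a°₋, a°₊) : εℤ → ℂ²`
vanishing outside `{0, ε, …, (N+1)ε}` where `N = L/ε`; integer coordinates. -/
def InV (N : ℤ) (a : ℤ → ℂ × ℂ) : Prop :=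
  ∀ j : ℤ, j < 0 ∨ N + 1 < j → a j = 0

/-- The transfer matrix `T`: `(b°₋(x-ε), b°₊(x+ε)) = U·(a°₋(x), a°₊(x))` for
`x = ε, …, Nε`, all other values being `0`; here `U = (1/(1+imε))·[[1,-imε],[-imε,1]]`. -/
noncomputable def transferFun (m ε : ℝ) (N : ℤ) (a : ℤ → ℂ × ℂ) : ℤ → ℂ × ℂ := fun j =>
  (if 0 ≤ j ∧ j ≤ N - 1 then
      (1 / (1 + Complex.I * m * ε)) * ((a (j + 1)).1 - Complex.I * m * ε * (a (j + 1)).2)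
    else 0,
   if 2 ≤ j ∧ j ≤ N + 1 then
      (1 / (1 + Complex.I * m * ε)) * (-(Complex.I * m * ε) * (a (j - 1)).1 + (a (j - 1)).2)
    else 0)

/-- The squared Euclidean norm on `V`. -/
noncomputable def vNormSq (N : ℤ) (a : ℤ → ℂ × ℂ) : ℝ :=
  ∑ j ∈ Finset.Icc (0 : ℤ) (N + 1),
    (‖(a j).1‖ ^ 2 + ‖(a j).2‖ ^ 2)


lemma aux_normSq (m ε : ℝ) (u v : ℂ) :
    Complex.normSq (u - Complex.I * m * ε * v) + Complex.normSq (-(Complex.I * m * ε) * u + v)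
      = (1 + (m*ε)^2) * (Complex.normSq u + Complex.normSq v) := by
  simp [Complex.normSq_apply]
  ring

lemma aux_ne (m ε : ℝ) : (1 + Complex.I * m * ε) ≠ 0 := by
  intro h
  have := congrArg Complex.re h
  simp at this

lemma aux_point (m ε : ℝ) (u v : ℂ) :
    ‖((1/(1 + Complex.I*m*ε)) * (u - Complex.I*m*ε*v))‖^2
    + ‖((1/(1 + Complex.I*m*ε)) * (-(Complex.I*m*ε)*u + v))‖^2
    = ‖u‖^2 + ‖v‖^2 := by
  have h2 : Complex.normSq (1 + Complex.I*m*ε) = 1 + (m*ε)^2 := by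
    simp [Complex.normSq_apply]; ring
  have hpos : (0:ℝ) < 1 + (m*ε)^2 := by positivity
  rw [Complex.sq_norm, Complex.sq_norm, Complex.sq_norm, Complex.sq_norm, map_mul, map_mul,
    map_div₀, map_one, h2]
  have h3 := aux_normSq m ε u v
  rw [neg_mul] at h3
  field_simp
  rw [show u * Complex.I * m * ε = Complex.I * m * ε * u by ring]
  linarith [h3]

lemma transfer_norm (m ε : ℝ) (N : ℤ) (hN : 1 ≤ N) (a : ℤ → ℂ × ℂ) :
    vNormSq N (transferFun m ε N a) =
      ∑ j ∈ Finset.Icc (1:ℤ) N,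
        (‖(a j).1‖ ^ 2 + ‖(a j).2‖ ^ 2) := by
  unfold vNormSq transferFun
  rw [Finset.sum_add_distrib]
  have e1 : ∀ j : ℤ,
      ‖(if 0 ≤ j ∧ j ≤ N - 1 then
        (1 / (1 + Complex.I * m * ε)) * ((a (j + 1)).1 - Complex.I * m * ε * (a (j + 1)).2)
      else 0)‖ ^ 2
      = if 0 ≤ j ∧ j ≤ N - 1 then
        ‖((1 / (1 + Complex.I * m * ε)) * ((a (j + 1)).1 - Complex.I * m * ε * (a (j + 1)).2))‖ ^ 2
      else 0 := by
    intro j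
    split <;> simp
  have e2 : ∀ j : ℤ,
      ‖(if 2 ≤ j ∧ j ≤ N + 1 then
        (1 / (1 + Complex.I * m * ε)) * (-(Complex.I * m * ε) * (a (j - 1)).1 + (a (j - 1)).2)
      else 0)‖ ^ 2
      = if 2 ≤ j ∧ j ≤ N + 1 then
        ‖((1 / (1 + Complex.I * m * ε)) * (-(Complex.I * m * ε) * (a (j - 1)).1 + (a (j - 1)).2))‖ ^ 2
      else 0 := by
    intro j
    split <;> simp
  simp only [e1, e2]
  rw [← Finset.sum_filter, ← Finset.sum_filter]
  have hf1 : (Finset.Icc (0:ℤ) (N+1)).filter (fun j => 0 ≤ j ∧ j ≤ N-1) = Finset.Icc 0 (N-1) := by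
    ext j; simp [Finset.mem_Icc]; omega
  have hf2 : (Finset.Icc (0:ℤ) (N+1)).filter (fun j => 2 ≤ j ∧ j ≤ N+1) = Finset.Icc 2 (N+1) := by
    ext j; simp [Finset.mem_Icc]; omega
  rw [hf1, hf2]
  have S1 : ∑ j ∈ Finset.Icc (0:ℤ) (N-1),
      ‖((1 / (1 + Complex.I * m * ε)) * ((a (j + 1)).1 - Complex.I * m * ε * (a (j + 1)).2))‖ ^ 2
      = ∑ x ∈ Finset.Icc (1:ℤ) N,
      ‖((1 / (1 + Complex.I * m * ε)) * ((a x).1 - Complex.I * m * ε * (a x).2))‖ ^ 2 := by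
    apply Finset.sum_nbij' (fun j => j + 1) (fun x => x - 1) <;>
      intros <;> simp_all [Finset.mem_Icc] <;> omega
  have S2 : ∑ j ∈ Finset.Icc (2:ℤ) (N+1),
      ‖((1 / (1 + Complex.I * m * ε)) * (-(Complex.I * m * ε) * (a (j - 1)).1 + (a (j - 1)).2))‖ ^ 2
      = ∑ x ∈ Finset.Icc (1:ℤ) N,
      ‖((1 / (1 + Complex.I * m * ε)) * (-(Complex.I * m * ε) * (a x).1 + (a x).2))‖ ^ 2 := by
    apply Finset.sum_nbij' (fun j => j - 1) (fun x => x + 1) <;>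
      intros <;> simp_all [Finset.mem_Icc] <;> omega
  rw [S1, S2, ← Finset.sum_add_distrib]
  exact Finset.sum_congr rfl fun x _ => aux_point m ε _ _

lemma smul_norm (N : ℤ) (lam : ℂ) (a : ℤ → ℂ × ℂ) :
    vNormSq N (lam • a) = ‖lam‖ ^ 2 * vNormSq N a := by
  unfold vNormSq
  rw [Finset.mul_sum]
  refine Finset.sum_congr rfl fun j _ => ?_
  simp [Prod.smul_fst, Prod.smul_snd, smul_eq_mul, map_mul, mul_pow]
  ring

lemma eigen_zero (m ε : ℝ) (N : ℤ) (lam : ℂ) (hlam : lam ≠ 0)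
    (a : ℤ → ℂ × ℂ) (ha : InV N a) (heig : transferFun m ε N a = lam • a)
    (h0 : a 0 = 0) (hN1 : a (N + 1) = 0) : a = 0 := by
  have hc : (1 + Complex.I * m * ε) ≠ 0 := aux_ne m ε
  have key : ∀ j : ℤ,
      (if 0 ≤ j ∧ j ≤ N - 1 then
        (1 / (1 + Complex.I * m * ε)) * ((a (j + 1)).1 - Complex.I * m * ε * (a (j + 1)).2)
      else 0) = lam * (a j).1 ∧
      (if 2 ≤ j ∧ j ≤ N + 1 then
        (1 / (1 + Complex.I * m * ε)) * (-(Complex.I * m * ε) * (a (j - 1)).1 + (a (j - 1)).2)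
      else 0) = lam * (a j).2 := by
    intro j
    have h := congrFun heig j
    simp only [transferFun, Pi.smul_apply, Prod.smul_fst, Prod.smul_snd, smul_eq_mul,
      Prod.ext_iff] at h
    exact h
  have hstep : ∀ k : ℤ, 0 ≤ k → a k = 0 → a (k + 1) = 0 := by
    intro k hk hak
    have h2 : (a (k + 1)).2 = 0 := by
      have h := (key (k + 1)).2
      by_cases hcase : 2 ≤ k + 1 ∧ k + 1 ≤ N + 1
      · rw [if_pos hcase] at h
        have hk1 : k + 1 - 1 = k := by ring
        rw [hk1, hak] at h
        simp at h
        rcases h with h | h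
        · exact absurd h hlam
        · exact h
      · rw [if_neg hcase] at h
        rcases mul_eq_zero.mp h.symm with h' | h'
        · exact absurd h' hlam
        · exact h'
    have h1 : (a (k + 1)).1 = 0 := by
      by_cases hcase : 0 ≤ k ∧ k ≤ N - 1
      · have h := (key k).1
        rw [if_pos hcase, hak] at h
        simp only [Prod.fst_zero, mul_zero] at h
        rcases mul_eq_zero.mp h with h' | h'
        · exact absurd h' (one_div_ne_zero hc)
        · have : (a (k + 1)).1 = Complex.I * m * ε * (a (k + 1)).2 := by
            linear_combination h'
          rw [this, h2, mul_zero]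
      · have hkN : N ≤ k := by omega
        rcases eq_or_lt_of_le hkN with heq | hlt
        · rw [← heq, hN1]; rfl
        · have : a (k + 1) = 0 := ha (k + 1) (Or.inr (by omega))
          rw [this]; rfl
    exact Prod.ext_iff.mpr ⟨h1, h2⟩
  have hall : ∀ k : ℤ, 0 ≤ k → a k = 0 := by
    intro k hk
    exact Int.le_induction h0 (fun n hn ih => hstep n hn ih) k hk
  funext j
  rcases lt_or_ge j 0 with h | h
  · exact ha j (Or.inl h)
  · exact hall j h


/-- Spectral-radius bound: every complex eigenvalue `λ` of the transfer
matrix `T` satisfies `|λ| < 1`. -/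
theorem spectral_radius_lt_one (ω m L ε : ℝ) (hω : 0 < ω) (hm : 0 < m) (hL : 0 < L)
    (hε : 0 < ε) (hmε : m * ε < 1) (N : ℤ) (hN : L = N * ε)
    (lam : ℂ) (a : ℤ → ℂ × ℂ) (ha : InV N a) (ha0 : a ≠ 0)
    (heig : transferFun m ε N a = lam • a) :
    ‖lam‖ < 1 := by
  -- N ≥ 1
  have hN1 : 1 ≤ N := by
    have h1 : (0:ℝ) < (N:ℝ) * ε := hN ▸ hL
    have h2 : (0:ℝ) < (N:ℝ) := by nlinarith
    have : (0:ℤ) < N := by exact_mod_cast h2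
    omega
  set f : ℂ × ℂ → ℝ := fun p => ‖p.1‖ ^ 2 + ‖p.2‖ ^ 2 with hf
  have hfnn : ∀ p, 0 ≤ f p := fun p => by positivity
  have hfzero : ∀ p, f p = 0 → p = 0 := by
    intro p hp
    have hp' : ‖p.1‖ ^ 2 + ‖p.2‖ ^ 2 = 0 := hp
    have hs1 : ‖p.1‖ ^ 2 = 0 := by
      have := sq_nonneg (‖p.1‖); have := sq_nonneg (‖p.2‖); linarith
    have hs2 : ‖p.2‖ ^ 2 = 0 := by
      have := sq_nonneg (‖p.1‖); have := sq_nonneg (‖p.2‖); linarith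
    have h1 : ‖p.1‖ = 0 := by
      have := pow_eq_zero_iff (n := 2) (by norm_num) |>.mp hs1; exact this
    have h2 : ‖p.2‖ = 0 := by
      have := pow_eq_zero_iff (n := 2) (by norm_num) |>.mp hs2; exact this
    exact Prod.ext_iff.mpr ⟨norm_eq_zero.mp h1, norm_eq_zero.mp h2⟩
  -- positivity of the norm of a
  have hS : 0 < vNormSq N a := by
    obtain ⟨j0, hj0⟩ := Function.ne_iff.mp ha0
    have hj0mem : j0 ∈ Finset.Icc (0:ℤ) (N+1) := by
      rw [Finset.mem_Icc]
      by_contra hmem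
      exact hj0 (ha j0 (by omega))
    refine Finset.sum_pos' (fun j _ => hfnn (a j)) ⟨j0, hj0mem, ?_⟩
    rcases (hfnn (a j0)).lt_or_eq with h | h
    · exact h
    · exact absurd (hfzero _ h.symm) hj0
  have hsub : Finset.Icc (1:ℤ) N ⊆ Finset.Icc (0:ℤ) (N+1) := by
    intro j hj; rw [Finset.mem_Icc] at *; omega
  have hle : ∑ j ∈ Finset.Icc (1:ℤ) N, f (a j) ≤ vNormSq N a :=
    Finset.sum_le_sum_of_subset_of_nonneg hsub (fun j _ _ => hfnn (a j))
  have hkey : ‖lam‖ ^ 2 * vNormSq N a = ∑ j ∈ Finset.Icc (1:ℤ) N, f (a j) := by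
    rw [← smul_norm N lam a, ← heig, transfer_norm m ε N hN1 a]
  have hsq_le : ‖lam‖ ^ 2 ≤ 1 := by
    by_contra hgt
    push_neg at hgt
    have h1 : vNormSq N a < ‖lam‖ ^ 2 * vNormSq N a := by nlinarith
    linarith [hkey ▸ hle]
  have hlam_le : ‖lam‖ ≤ 1 := by
    nlinarith [norm_nonneg lam, hsq_le]
  rcases hlam_le.lt_or_eq with h | h
  · exact h
  -- equality case: derive contradiction
  exfalso
  have hlam_ne : lam ≠ 0 := by
    intro h0; rw [h0] at h; simp at h
  have hsum_eq : ∑ j ∈ Finset.Icc (1:ℤ) N, f (a j) = vNormSq N a := by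
    rw [← hkey, h]; ring
  -- decompose the full sum
  have hins : Finset.Icc (0:ℤ) (N+1) = insert 0 (insert (N+1) (Finset.Icc (1:ℤ) N)) := by
    ext j; simp [Finset.mem_Icc]; omega
  have h0ni : (0:ℤ) ∉ insert (N+1) (Finset.Icc (1:ℤ) N) := by
    simp [Finset.mem_Icc]; omega
  have hN1ni : (N+1) ∉ Finset.Icc (1:ℤ) N := by
    simp [Finset.mem_Icc]
  have hdecomp : vNormSq N a = f (a 0) + (f (a (N+1)) + ∑ j ∈ Finset.Icc (1:ℤ) N, f (a j)) := by
    unfold vNormSq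
    rw [hins, Finset.sum_insert h0ni, Finset.sum_insert hN1ni]
  have hzero : f (a 0) + f (a (N+1)) = 0 := by
    have := hsum_eq
    rw [hdecomp] at this
    linarith
  have ha0' : a 0 = 0 := hfzero _ (by linarith [hfnn (a 0), hfnn (a (N+1))])
  have haN1 : a (N+1) = 0 := hfzero _ (by linarith [hfnn (a 0), hfnn (a (N+1))])
  exact ha0 (eigen_zero m ε N lam hlam_ne a ha heig ha0' haN1)
end

section
/- Fix ω, m > 0. For all sufficiently small ε > 0 one has |cos(ωε) − mε·sin(ωε)| < 1, so there is a unique k(ε) ∈ (0, π/ε) with cos(k(ε)·ε) = cos(ωε) − mε·sin(ωε). Then lim_{ε↘0} k(ε) = ω·√(1 + 2m/ω). -/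
open scoped BigOperators

open Filter Real Topology

lemma tendsto_sin_div' : Tendsto (fun x => Real.sin x / x) (𝓝[≠] (0:ℝ)) (𝓝 1) := by
  have h := Real.hasDerivAt_sin 0
  rw [hasDerivAt_iff_tendsto_slope] at h
  simpa [slope_fun_def, Real.sin_zero, Real.cos_zero, div_eq_inv_mul] using h

lemma tendsto_one_add_cos : Tendsto (fun x : ℝ => 1 + Real.cos x) (𝓝[≠] (0:ℝ)) (𝓝 2) := by
  have : Tendsto (fun x : ℝ => 1 + Real.cos x) (𝓝 0) (𝓝 (1 + Real.cos 0)) :=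
    (continuous_const.add Real.continuous_cos).tendsto 0
  have := this.mono_left (nhdsWithin_le_nhds (s := {(0:ℝ)}ᶜ))
  norm_num at this; exact this

lemma tendsto_one_sub_cos : Tendsto (fun x => (1 - Real.cos x)/x^2) (𝓝[≠] (0:ℝ)) (𝓝 (1/2)) := by
  have hc : Tendsto (fun x => (Real.sin x / x)^2 * (1 + Real.cos x)⁻¹) (𝓝[≠] (0:ℝ))
      (𝓝 (1^2 * (2:ℝ)⁻¹)) := (tendsto_sin_div'.pow 2).mul (tendsto_one_add_cos.inv₀ (by norm_num))
  have hc2 : Tendsto (fun x => (Real.sin x / x)^2 * (1 + Real.cos x)⁻¹) (𝓝[≠] (0:ℝ))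
      (𝓝 (1/2)) := by convert hc using 2; norm_num
  refine hc2.congr' ?_
  have hmem : ∀ᶠ x in 𝓝[≠] (0:ℝ), 0 < 1 + Real.cos x :=
    tendsto_one_add_cos.eventually (eventually_gt_nhds (by norm_num))
  filter_upwards [hmem, self_mem_nhdsWithin] with x hx hx0
  have hx0' : (x:ℝ) ≠ 0 := hx0
  field_simp
  nlinarith [Real.sin_sq_add_cos_sq x]


/-- For all sufficiently small `ε > 0` one has
`|cos(ωε) - mε·sin(ωε)| < 1`, so there is a unique `k(ε) ∈ (0, π/ε)` with
`cos(k(ε)·ε) = cos(ωε) - mε·sin(ωε)`; and `k(ε) → ω·√(1 + 2m/ω)` as `ε ↘ 0`. -/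
theorem wavenumber_limit (ω m : ℝ) (hω : 0 < ω) (hm : 0 < m) :
    (∀ᶠ ε in nhdsWithin 0 (Set.Ioi (0 : ℝ)),
      |Real.cos (ω * ε) - m * ε * Real.sin (ω * ε)| < 1 ∧
      ∃! k : ℝ, k ∈ Set.Ioo 0 (Real.pi / ε) ∧
        Real.cos (k * ε) = Real.cos (ω * ε) - m * ε * Real.sin (ω * ε)) ∧
    ∀ k : ℝ → ℝ,
      (∀ᶠ ε in nhdsWithin 0 (Set.Ioi (0 : ℝ)),
        k ε ∈ Set.Ioo 0 (Real.pi / ε) ∧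
        Real.cos (k ε * ε) = Real.cos (ω * ε) - m * ε * Real.sin (ω * ε)) →
      Filter.Tendsto k (nhdsWithin 0 (Set.Ioi (0 : ℝ)))
        (nhds (ω * Real.sqrt (1 + 2 * m / ω))) := by
  set l := nhdsWithin (0:ℝ) (Set.Ioi (0 : ℝ)) with hl
  set f : ℝ → ℝ := fun ε => Real.cos (ω * ε) - m * ε * Real.sin (ω * ε) with hf
  set θ : ℝ → ℝ := fun ε => Real.arccos (f ε) with hθ
  -- basic eventual facts
  have hεpos : ∀ᶠ ε in l, 0 < ε := self_mem_nhdsWithin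
  have hsmall : ∀ᶠ ε in l, ε < Real.pi / (2 * ω) := by
    have : Set.Ioo (0:ℝ) (Real.pi / (2*ω)) ∈ l :=
      Ioo_mem_nhdsGT_of_mem (by constructor <;> positivity)
    filter_upwards [this] with ε hε using hε.2
  have hfc : Tendsto f l (𝓝 1) := by
    have : Continuous f := by
      apply Continuous.sub (Real.continuous_cos.comp (continuous_const.mul continuous_id))
      exact ((continuous_const.mul continuous_id).mul
        (Real.continuous_sin.comp (continuous_const.mul continuous_id)))
    have h0 : f 0 = 1 := by simp [hf]
    have := (this.tendsto 0).mono_left (nhdsWithin_le_nhds (s := Set.Ioi (0:ℝ)))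
    rwa [h0] at this
  have hfgt : ∀ᶠ ε in l, -1 < f ε := hfc.eventually (eventually_gt_nhds (by norm_num))
  have hflt : ∀ᶠ ε in l, f ε < 1 := by
    filter_upwards [hεpos, hsmall] with ε hε1 hε2
    have hωε : 0 < ω * ε := by positivity
    have hωε2 : ω * ε < Real.pi := by
      have : ω * ε < ω * (Real.pi / (2*ω)) := by
        exact mul_lt_mul_of_pos_left hε2 hω
      have h2 : ω * (Real.pi / (2*ω)) = Real.pi / 2 := by field_simp
      rw [h2] at this
      linarith [Real.pi_pos]
    have hsin : 0 < Real.sin (ω * ε) := Real.sin_pos_of_pos_of_lt_pi hωε hωε2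
    have hcos := Real.cos_le_one (ω * ε)
    have : 0 < m * ε * Real.sin (ω * ε) := by positivity
    simp only [hf]; linarith
  have hπ := Real.pi_pos
  -- θ eventually positive, tends to 0 within ≠ 0
  have hθto0 : Tendsto θ l (𝓝[≠] 0) := by
    rw [tendsto_nhdsWithin_iff]
    constructor
    · have : Tendsto θ l (𝓝 (Real.arccos 1)) := (Real.continuous_arccos.tendsto 1).comp hfc
      simpa using this
    · filter_upwards [hflt] with ε hε
      have : 0 < θ ε := Real.arccos_pos.2 hε
      exact ne_of_gt this
  -- k ε = θ ε / ε eventually (for any valid k), from injectivity of cos on [0,π]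
  have huniq : ∀ ε : ℝ, 0 < ε → -1 < f ε → f ε < 1 → ∀ k' : ℝ,
      k' ∈ Set.Ioo 0 (Real.pi / ε) → Real.cos (k' * ε) = f ε → k' = θ ε / ε := by
    intro ε hε h1 h2 k' ⟨hk1, hk2⟩ hk3
    have hθIcc : θ ε ∈ Set.Icc 0 Real.pi := ⟨Real.arccos_nonneg _, Real.arccos_le_pi _⟩
    have hkIcc : k' * ε ∈ Set.Icc 0 Real.pi := by
      constructor
      · positivity
      · linarith [(lt_div_iff₀ hε).1 hk2]
    have hcosθ : Real.cos (θ ε) = f ε := Real.cos_arccos h1.le h2.le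
    have : k' * ε = θ ε := Real.injOn_cos hkIcc hθIcc (by rw [hk3, hcosθ])
    field_simp [ne_of_gt hε] at this ⊢
    linarith
  constructor
  · -- Part 1
    filter_upwards [hεpos, hfgt, hflt] with ε hε h1 h2
    refine ⟨abs_lt.2 ⟨h1, h2⟩, θ ε / ε, ⟨⟨?_, ?_⟩, ?_⟩, ?_⟩
    · exact div_pos (Real.arccos_pos.2 h2) hε
    · refine div_lt_div_of_pos_right ?_ hε
      simp only [hθ, Real.arccos]
      have := Real.neg_pi_div_two_lt_arcsin.2 h1
      linarith
    · rw [div_mul_cancel₀ _ (ne_of_gt hε)]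
      exact Real.cos_arccos h1.le h2.le
    · intro k' ⟨hk1, hk2⟩
      exact huniq ε hε h1 h2 k' hk1 hk2
  · -- Part 2
    intro k hk
    have hmap : Tendsto (fun ε => ω * ε) l (𝓝[≠] 0) := by
      rw [tendsto_nhdsWithin_iff]
      constructor
      · have : Tendsto (fun ε : ℝ => ω * ε) (𝓝 0) (𝓝 (ω * 0)) :=
          (continuous_const.mul continuous_id).tendsto 0
        simpa using this.mono_left (nhdsWithin_le_nhds (s := Set.Ioi (0:ℝ)))
      · filter_upwards [hεpos] with ε hε
        exact ne_of_gt (by positivity)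
    have hA : Tendsto (fun ε => Real.sin (ω * ε) / ε) l (𝓝 ω) := by
      have h1 := (tendsto_sin_div'.comp hmap).const_mul ω
      rw [mul_one] at h1
      refine h1.congr' ?_
      filter_upwards [hεpos] with ε hε
      have : ε ≠ 0 := ne_of_gt hε
      have hω' : ω ≠ 0 := ne_of_gt hω
      simp only [Function.comp_apply]
      field_simp [Function.comp]
    have hB : Tendsto (fun ε => (1 - Real.cos (ω * ε)) / ε ^ 2) l (𝓝 (ω ^ 2 / 2)) := by
      have h1 := (tendsto_one_sub_cos.comp hmap).const_mul (ω ^ 2)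
      have h2 : ω ^ 2 * (1 / 2) = ω ^ 2 / 2 := by ring
      rw [h2] at h1
      refine h1.congr' ?_
      filter_upwards [hεpos] with ε hε
      have hε' : ε ≠ 0 := ne_of_gt hε
      have hω' : ω ≠ 0 := ne_of_gt hω
      simp only [Function.comp]
      rw [mul_pow]
      field_simp
    have hF : Tendsto (fun ε => (1 - f ε) / ε ^ 2) l (𝓝 (ω ^ 2 / 2 + m * ω)) := by
      have := hB.add (hA.const_mul m)
      refine this.congr' ?_
      filter_upwards [hεpos] with ε hε
      have hε' : ε ≠ 0 := ne_of_gt hε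
      simp only [hf]
      field_simp
      ring
    have hC : Tendsto (fun ε => (1 - f ε) / (θ ε) ^ 2) l (𝓝 (1 / 2)) := by
      refine (tendsto_one_sub_cos.comp hθto0).congr' ?_
      filter_upwards [hfgt, hflt] with ε h1 h2
      simp only [Function.comp, hθ]
      rw [Real.cos_arccos h1.le h2.le]
    have hQ := hF.div hC (by norm_num : (1:ℝ)/2 ≠ 0)
    have hT : Tendsto (fun ε => (θ ε / ε) ^ 2) l (𝓝 (ω ^ 2 + 2 * m * ω)) := by
      have hval : (ω ^ 2 / 2 + m * ω) / (1 / 2) = ω ^ 2 + 2 * m * ω := by ring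
      rw [hval] at hQ
      refine hQ.congr' ?_
      filter_upwards [hεpos, hflt] with ε hε h2
      have hε' : ε ≠ 0 := ne_of_gt hε
      have hθpos : 0 < θ ε := Real.arccos_pos.2 h2
      have hθ' : θ ε ≠ 0 := ne_of_gt hθpos
      have h1f : 1 - f ε ≠ 0 := by intro h; apply absurd h2; linarith [sub_eq_zero.1 h]
      rw [Pi.div_apply]
      field_simp
    have hS : Tendsto (fun ε => θ ε / ε) l (𝓝 (Real.sqrt (ω ^ 2 + 2 * m * ω))) := by
      have := (Real.continuous_sqrt.tendsto _).comp hT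
      refine this.congr' ?_
      filter_upwards [hεpos, hflt] with ε hε h2
      have hθpos : 0 < θ ε := Real.arccos_pos.2 h2
      simp only [Function.comp]
      exact Real.sqrt_sq (by positivity)
    have hval : ω * Real.sqrt (1 + 2 * m / ω) = Real.sqrt (ω ^ 2 + 2 * m * ω) := by
      rw [show ω * Real.sqrt (1 + 2 * m / ω) = Real.sqrt (ω ^ 2) * Real.sqrt (1 + 2 * m / ω) by
        rw [Real.sqrt_sq hω.le], ← Real.sqrt_mul (sq_nonneg ω)]
      congr 1
      field_simp
    rw [hval]
    refine hS.congr' ?_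
    filter_upwards [hk, hεpos, hfgt, hflt] with ε ⟨hk1, hk2⟩ hε h1 h2
    exact (huniq ε hε h1 h2 (k ε) hk1 hk2).symm
end

section
/- Fix real ω, m, L > 0, set n := √(1 + 2m/ω) and k := ωn, and assume kL/π ∉ ℤ. Then the linear system c = a·(−m−ω−k)/m, d = b·(−m−ω+k)/m, a + b = 1, c·e^{ikL} + d·e^{−ikL} = 0 has a unique solution (a, b, c, d) ∈ ℂ⁴, and this solution satisfies c + d = −m/(m + ω − ik·cot(kL)) and |c + d|² = (n²−1)²/((n²+1)² + 4n²·cot²(nωL)). -/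
open scoped BigOperators

/-- The linear system in the unknowns `(a,b,c,d)`:
`c = a·(-m-ω-k)/m`, `d = b·(-m-ω+k)/m`, `a + b = 1`, `c·e^{ikL} + d·e^{-ikL} = 0`. -/
def limitSystem (ω m L k : ℝ) (p : ℂ × ℂ × ℂ × ℂ) : Prop :=
  p.2.2.1 = p.1 * (((-m - ω - k) / m : ℝ) : ℂ) ∧
  p.2.2.2 = p.2.1 * (((-m - ω + k) / m : ℝ) : ℂ) ∧
  p.1 + p.2.1 = 1 ∧
  p.2.2.1 * Complex.exp (Complex.I * k * L) + p.2.2.2 * Complex.exp (-(Complex.I * k * L)) = 0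

/-- With `n = √(1+2m/ω)`, `k = ωn`, and `kL/π ∉ ℤ`, the linear system has a
unique solution `(a,b,c,d) ∈ ℂ⁴`, which satisfies `c + d = -m/(m + ω - ik·cot(kL))` and
`|c + d|² = (n²-1)²/((n²+1)² + 4n²·cot²(nωL))`. -/
theorem limit_system_solution (ω m L : ℝ) (hω : 0 < ω) (hm : 0 < m) (hL : 0 < L)
    (n k : ℝ) (hn : n = Real.sqrt (1 + 2 * m / ω)) (hk : k = ω * n)
    (hnotint : ¬ ∃ z : ℤ, k * L = z * Real.pi) :
    (∃! p : ℂ × ℂ × ℂ × ℂ, limitSystem ω m L k p) ∧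
    ∀ p : ℂ × ℂ × ℂ × ℂ, limitSystem ω m L k p →
      p.2.2.1 + p.2.2.2 =
        -(m : ℂ) / ((m : ℂ) + (ω : ℂ) - Complex.I * k * Complex.cot ((k : ℂ) * L)) ∧
      ‖p.2.2.1 + p.2.2.2‖ ^ 2 =
        (n ^ 2 - 1) ^ 2 / ((n ^ 2 + 1) ^ 2 + 4 * n ^ 2 * Real.cot (n * ω * L) ^ 2) := by
  have hω0 : ω ≠ 0 := ne_of_gt hω
  have hm0 : m ≠ 0 := ne_of_gt hm
  have hmC : (m : ℂ) ≠ 0 := by exact_mod_cast hm0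
  have hn2 : n ^ 2 = 1 + 2 * m / ω := by rw [hn, Real.sq_sqrt (by positivity)]
  have hk2 : k ^ 2 = ω ^ 2 + 2 * m * ω := by rw [hk, mul_pow, hn2]; field_simp
  have hk2C : (k : ℂ) ^ 2 = (ω : ℂ) ^ 2 + 2 * m * ω := by exact_mod_cast hk2
  have hS : Real.sin (k * L) ≠ 0 := by
    intro h
    obtain ⟨z, hz⟩ := Real.sin_eq_zero_iff.1 h
    exact hnotint ⟨z, hz.symm⟩
  have hSC : ((Real.sin (k * L) : ℝ) : ℂ) ≠ 0 := by exact_mod_cast hS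
  set sn : ℂ := ((Real.sin (k * L) : ℝ) : ℂ) with hsn
  set cs : ℂ := ((Real.cos (k * L) : ℝ) : ℂ) with hcs
  set A : ℂ := -(m : ℂ) - ω - k with hA
  set B : ℂ := -(m : ℂ) - ω + k with hB
  set E : ℂ := cs + sn * Complex.I with hEe
  set F : ℂ := cs - sn * Complex.I with hFe
  have hkL : ((k : ℂ) * L) = ((k * L : ℝ) : ℂ) := by push_cast; ring
  have hEexp : Complex.exp (Complex.I * k * L) = E := by
    rw [show (Complex.I * (k:ℂ) * L) = ((k * L : ℝ) : ℂ) * Complex.I by push_cast; ring,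
      Complex.exp_mul_I, hEe, hsn, hcs, Complex.ofReal_cos, Complex.ofReal_sin]
  have hFexp : Complex.exp (-(Complex.I * k * L)) = F := by
    rw [show (-(Complex.I * (k:ℂ) * L)) = ((-(k * L) : ℝ) : ℂ) * Complex.I by push_cast; ring,
      Complex.exp_mul_I, Complex.ofReal_neg, Complex.cos_neg, Complex.sin_neg,
      hFe, hsn, hcs, Complex.ofReal_cos, Complex.ofReal_sin]
    ring
  have hABm : A * B = (m : ℂ) ^ 2 := by rw [hA, hB]; linear_combination -hk2C
  have hα : (((-m - ω - k) / m : ℝ) : ℂ) = A / m := by rw [hA]; push_cast; ring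
  have hβ : (((-m - ω + k) / m : ℝ) : ℂ) = B / m := by rw [hB]; push_cast; ring
  have hDm : A * E - B * F ≠ 0 := by
    intro h
    have hform : A * E - B * F =
        Complex.ofReal (-2 * k * Real.cos (k * L)) +
        Complex.ofReal (-(2 * (m + ω) * Real.sin (k * L))) * Complex.I := by
      rw [hA, hB, hEe, hFe, hsn, hcs]; push_cast; ring
    have h2 : (A * E - B * F).im = -(2 * (m + ω) * Real.sin (k * L)) := by
      rw [hform]
      simp only [Complex.add_im, Complex.mul_im, Complex.ofReal_im, Complex.ofReal_re,
        Complex.I_im, Complex.I_re]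
      ring
    rw [h] at h2
    have h3 : 2 * (m + ω) * Real.sin (k * L) = 0 := by
      simpa using h2.symm
    rcases mul_eq_zero.mp h3 with h4 | h4
    · linarith
    · exact hS h4
  have key : ∀ p : ℂ × ℂ × ℂ × ℂ, limitSystem ω m L k p →
      p = (-B * F / (A * E - B * F), A * E / (A * E - B * F),
           -(m : ℂ) * F / (A * E - B * F), (m : ℂ) * E / (A * E - B * F)) := by
    rintro ⟨a, b, c, d⟩ ⟨h1, h2, h3, h4⟩
    dsimp only at h1 h2 h3 h4 ⊢
    rw [hα] at h1
    rw [hβ] at h2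
    rw [hEexp, hFexp] at h4
    have h1' : c * m = a * A := by rw [h1]; field_simp
    have h2' : d * m = b * B := by rw [h2]; field_simp
    have ha : a * (A * E - B * F) = -B * F := by
      linear_combination (m : ℂ) * h4 - E * h1' - F * h2' - B * F * h3
    have haa : a = -B * F / (A * E - B * F) := by rw [eq_div_iff hDm]; exact ha
    have hb' : b * (A * E - B * F) = A * E := by
      linear_combination -ha + (A * E - B * F) * h3
    have hbb : b = A * E / (A * E - B * F) := by rw [eq_div_iff hDm]; exact hb'
    have hcc : c = -(m : ℂ) * F / (A * E - B * F) := by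
      rw [eq_div_iff hDm]
      apply mul_left_cancel₀ hmC
      linear_combination (A * E - B * F) * h1' + A * ha - F * hABm
    have hdd : d = (m : ℂ) * E / (A * E - B * F) := by
      rw [eq_div_iff hDm]
      apply mul_left_cancel₀ hmC
      linear_combination (A * E - B * F) * h2' + B * hb' + E * hABm
    simp only [Prod.mk.injEq]
    exact ⟨haa, hbb, hcc, hdd⟩
  have hsol : limitSystem ω m L k
      (-B * F / (A * E - B * F), A * E / (A * E - B * F),
       -(m : ℂ) * F / (A * E - B * F), (m : ℂ) * E / (A * E - B * F)) := by
    refine ⟨?_, ?_, ?_, ?_⟩ <;> dsimp only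
    · rw [hα, div_mul_div_comm, div_eq_div_iff hDm (mul_ne_zero hDm hmC)]
      linear_combination (F * (A * E - B * F)) * hABm
    · rw [hβ, div_mul_div_comm, div_eq_div_iff hDm (mul_ne_zero hDm hmC)]
      linear_combination (-(E * (A * E - B * F))) * hABm
    · rw [← add_div, div_eq_one_iff_eq hDm]; ring
    · rw [hEexp, hFexp]; ring
  have hcot : Complex.cot ((k : ℂ) * L) = cs / sn := by
    rw [hkL, Complex.cot_eq_cos_div_sin, ← Complex.ofReal_cos, ← Complex.ofReal_sin]
  have hQ : ((m : ℂ) + ω - Complex.I * k * Complex.cot ((k : ℂ) * L)) ≠ 0 := by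
    rw [hcot]
    intro h
    have hform : ((m : ℂ) + ω - Complex.I * k * (cs / sn)) =
        Complex.ofReal (m + ω) +
        Complex.ofReal (-(k * (Real.cos (k * L) / Real.sin (k * L)))) * Complex.I := by
      rw [hsn, hcs]; push_cast; ring
    have hre : (((m : ℂ) + ω - Complex.I * k * (cs / sn))).re = m + ω := by
      rw [hform]
      simp only [Complex.add_re, Complex.mul_re, Complex.ofReal_im, Complex.ofReal_re,
        Complex.I_im, Complex.I_re]
      ring
    rw [h] at hre
    simp at hre
    linarith
  have hQ' : ((m : ℂ) + ω - Complex.I * k * (cs / sn)) ≠ 0 := by rw [← hcot]; exact hQ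
  have hEF : E - F = 2 * sn * Complex.I := by rw [hEe, hFe]; ring
  have hfrac : cs / sn * sn = cs := div_mul_cancel₀ cs hSC
  have hQD : ((m : ℂ) + ω - Complex.I * k * (cs / sn)) * (2 * sn * Complex.I)
      = -(A * E - B * F) := by
    rw [hA, hB, hEe, hFe]
    linear_combination (-2 * (k:ℂ) * Complex.I ^ 2) * hfrac + (-2 * (k:ℂ) * cs) * Complex.I_sq
  have hsum : -(m : ℂ) * F / (A * E - B * F) + (m : ℂ) * E / (A * E - B * F) =
      -(m : ℂ) / ((m : ℂ) + ω - Complex.I * k * Complex.cot ((k : ℂ) * L)) := by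
    rw [hcot, ← add_div, div_eq_div_iff hDm hQ']
    linear_combination ((m:ℂ) * ((m : ℂ) + ω - Complex.I * k * (cs / sn))) * hEF
      + (m:ℂ) * hQD
  refine ⟨⟨_, hsol, fun q hq => key q hq⟩, ?_⟩
  intro p hp
  rw [key p hp]
  dsimp only
  constructor
  · exact hsum
  · rw [hsum]
    have hQform : ((m : ℂ) + ω - Complex.I * k * Complex.cot ((k : ℂ) * L)) =
        Complex.ofReal (m + ω) + Complex.ofReal (-(k * Real.cot (k * L))) * Complex.I := by
      rw [hkL, ← Complex.ofReal_cot]; push_cast; ring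
    rw [norm_div, div_pow, Complex.sq_norm, Complex.sq_norm, hQform, Complex.normSq_add_mul_I]
    have hnm : Complex.normSq (-(m : ℂ)) = m ^ 2 := by
      rw [Complex.normSq_neg, Complex.normSq_ofReal]
      exact (pow_two m).symm
    rw [hnm]
    have harg : k * L = n * ω * L := by rw [hk]; ring
    rw [harg]
    have hm2 : m = (ω * n ^ 2 - ω) / 2 := by rw [hn2]; field_simp; ring
    have hd1 : 0 < (m + ω) ^ 2 + (-(k * Real.cot (n * ω * L))) ^ 2 := by
      have h1 : 0 < (m + ω) ^ 2 := by positivity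
      nlinarith [sq_nonneg (-(k * Real.cot (n * ω * L)))]
    have hd2 : 0 < (n ^ 2 + 1) ^ 2 + 4 * n ^ 2 * Real.cot (n * ω * L) ^ 2 := by
      have hn0 : 0 < n ^ 2 := by rw [hn2]; positivity
      nlinarith [sq_nonneg (Real.cot (n * ω * L)), sq_nonneg (n ^ 2 + 1)]
    rw [div_eq_div_iff hd1.ne' hd2.ne']
    rw [hm2, hk]
    ring
end

section
/- For every a° ∈ V satisfying a°_+(0) = a°_+(ε) = a°_−(L) = a°_−(L+ε) = 0, the global probability conservation identity holds: ‖a°‖² = |a°_−(0)|² + |a°_+(L+ε)|² + ‖T(a°)‖². -/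
open scoped BigOperators


private lemma unitary_step_key (m ε : ℝ) (v w : ℂ) :
    ‖((1 / (1 + Complex.I * m * ε)) * (v - Complex.I * m * ε * w))‖ ^ 2 +
      ‖((1 / (1 + Complex.I * m * ε)) * (-(Complex.I * m * ε) * v + w))‖ ^ 2 =
    ‖v‖ ^ 2 + ‖w‖ ^ 2 := by
  have h : Complex.normSq (1 + Complex.I * m * ε) = 1 + m^2 * ε^2 := by
    simp [Complex.normSq_apply]; ring
  have h0 : Complex.normSq (1 + Complex.I * m * ε) ≠ 0 := by rw [h]; positivity
  have key : Complex.normSq (v - Complex.I * m * ε * w) +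
      Complex.normSq (-(Complex.I * (m:ℂ) * ε * v) + w) =
      Complex.normSq (1 + Complex.I * m * ε) * (Complex.normSq v + Complex.normSq w) := by
    obtain ⟨vr, vi⟩ := v; obtain ⟨wr, wi⟩ := w
    simp [Complex.normSq_apply, Complex.mul_re, Complex.mul_im]
    ring
  simp only [norm_mul, norm_div, norm_one, neg_mul, mul_pow, div_pow, one_pow, Complex.sq_norm]
  rw [← mul_add, key]
  field_simp

private lemma sum_shift (F : ℤ → ℝ) (p q : ℤ) :
    ∑ j ∈ Finset.Icc p q, F (j + 1) = ∑ j ∈ Finset.Icc (p + 1) (q + 1), F j := by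
  rw [← Finset.map_add_right_Icc p q 1, Finset.sum_map]
  rfl

/-- Global probability conservation: for `a° ∈ V` with
`a°₊(0) = a°₊(ε) = a°₋(L) = a°₋(L+ε) = 0` (integer coordinates, `L = N·ε`),
`‖a°‖² = |a°₋(0)|² + |a°₊(L+ε)|² + ‖T(a°)‖²`. -/
theorem global_probability_conservation (ω m L ε : ℝ) (hω : 0 < ω) (hm : 0 < m) (hL : 0 < L)
    (hε : 0 < ε) (hmε : m * ε < 1) (N : ℤ) (hN : L = N * ε)
    (a : ℤ → ℂ × ℂ) (ha : InV N a)
    (h0 : (a 0).2 = 0) (h1 : (a 1).2 = 0) (hN0 : (a N).1 = 0) (hN1 : (a (N + 1)).1 = 0) :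
    vNormSq N a =
      ‖(a 0).1‖ ^ 2 + ‖(a (N + 1)).2‖ ^ 2 +
        vNormSq N (transferFun m ε N a) := by
  classical
  have hNge : (1:ℤ) ≤ N := by
    by_contra hcon
    push_neg at hcon
    have hN0' : (N:ℝ) ≤ 0 := by exact_mod_cast (by omega : N ≤ 0)
    nlinarith
  -- the transfer norm
  have hT : vNormSq N (transferFun m ε N a) =
      ∑ x ∈ Finset.Icc (1:ℤ) N,
        (‖((1 / (1 + Complex.I * m * ε)) *
            ((a x).1 - Complex.I * m * ε * (a x).2))‖ ^ 2 +
          ‖((1 / (1 + Complex.I * m * ε)) *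
            (-(Complex.I * m * ε) * (a x).1 + (a x).2))‖ ^ 2) := by
    unfold vNormSq transferFun
    simp only [apply_ite (fun z : ℂ => ‖z‖), norm_zero]
    simp only [apply_ite (fun r : ℝ => r ^ 2)]
    simp only [ne_eq, OfNat.ofNat_ne_zero, not_false_eq_true, zero_pow]
    rw [Finset.sum_add_distrib, ← Finset.sum_filter, ← Finset.sum_filter]
    have e1 : (Finset.Icc (0:ℤ) (N+1)).filter (fun j => 0 ≤ j ∧ j ≤ N - 1)
        = Finset.Icc (0:ℤ) (N-1) := by
      ext j; simp only [Finset.mem_filter, Finset.mem_Icc]; omega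
    have e2 : (Finset.Icc (0:ℤ) (N+1)).filter (fun j => 2 ≤ j ∧ j ≤ N + 1)
        = Finset.Icc (2:ℤ) (N+1) := by
      ext j; simp only [Finset.mem_filter, Finset.mem_Icc]; omega
    rw [e1, e2]
    rw [show ∑ j ∈ Finset.Icc (0:ℤ) (N-1),
          ‖(1 / (1 + Complex.I * m * ε) *
            ((a (j+1)).1 - Complex.I * m * ε * (a (j+1)).2))‖ ^ 2
        = ∑ j ∈ Finset.Icc (0:ℤ) (N-1),
          (fun x => ‖(1 / (1 + Complex.I * m * ε) *
            ((a x).1 - Complex.I * m * ε * (a x).2))‖ ^ 2) (j + 1) from rfl,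
      sum_shift (fun x => ‖(1 / (1 + Complex.I * m * ε) *
            ((a x).1 - Complex.I * m * ε * (a x).2))‖ ^ 2) 0 (N-1)]
    rw [show ∑ j ∈ Finset.Icc (2:ℤ) (N+1),
          ‖(1 / (1 + Complex.I * m * ε) *
            (-(Complex.I * m * ε) * (a (j-1)).1 + (a (j-1)).2))‖ ^ 2
        = ∑ j ∈ Finset.Icc (1:ℤ) N,
          ‖(1 / (1 + Complex.I * m * ε) *
            (-(Complex.I * m * ε) * (a j).1 + (a j).2))‖ ^ 2 from by
        rw [show (2:ℤ) = 1 + 1 from rfl,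
          ← sum_shift (fun x => ‖(1 / (1 + Complex.I * m * ε) *
            (-(Complex.I * m * ε) * (a (x-1)).1 + (a (x-1)).2))‖ ^ 2) 1 N]
        exact Finset.sum_congr rfl fun j _ => by norm_num]
    rw [show (0:ℤ) + 1 = 1 from rfl, show N - 1 + 1 = N by ring, ← Finset.sum_add_distrib]
  rw [hT]
  have hsum : ∑ x ∈ Finset.Icc (1:ℤ) N,
      (‖((1 / (1 + Complex.I * m * ε)) *
          ((a x).1 - Complex.I * m * ε * (a x).2))‖ ^ 2 +
        ‖((1 / (1 + Complex.I * m * ε)) *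
          (-(Complex.I * m * ε) * (a x).1 + (a x).2))‖ ^ 2)
      = ∑ x ∈ Finset.Icc (1:ℤ) N,
        (‖(a x).1‖ ^ 2 + ‖(a x).2‖ ^ 2) :=
    Finset.sum_congr rfl fun x _ => unitary_step_key m ε (a x).1 (a x).2
  rw [hsum]
  unfold vNormSq
  have hsplit : Finset.Icc (0:ℤ) (N+1) = insert 0 (insert (N+1) (Finset.Icc (1:ℤ) N)) := by
    ext j
    simp only [Finset.mem_insert, Finset.mem_Icc]
    omega
  rw [hsplit, Finset.sum_insert, Finset.sum_insert]
  · rw [h0, hN1]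
    simp
    ring
  · simp only [Finset.mem_Icc]; omega
  · simp only [Finset.mem_insert, Finset.mem_Icc]; omega
end

section
/- If λ ∈ ℂ with λ ≠ 0 and a° ∈ V satisfies T(a°) = λ·a° and a°_−(0) = 0, then a° = 0. In particular, no eigenvector of T corresponding to a nonzero eigenvalue has vanishing component a°_−(0). -/
open scoped BigOperators

/-!
Read at a site `x`, the eigenvalue equation `T a° = λ a°` expresses `λ a°₊(x + ε)` through
`a°(x)`, and `λ a°₋(x)` through `a°(x + ε)` with the nonzero coefficient `1/(1 + imε)` in
front of `a°₋(x + ε)`. Since `λ ≠ 0`, vanishing of `a°(x)` therefore forces first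
`a°₊(x + ε) = 0` and then `a°₋(x + ε) = 0`. At the left end `a°₊(0) = 0` because `T` never
writes there, so `a°(0) = 0` and the vanishing propagates to the right; to the left of `0`
both components vanish because `T` never writes there either.
-/

open Complex

theorem one_add_I_mul_mul_ne_zero (m ε : ℝ) : 1 + I * m * ε ≠ 0 := by
  intro h
  simpa using congrArg re h

namespace transferFun

variable {m ε : ℝ} {N : ℤ} {lam : ℂ} {a : ℤ → ℂ × ℂ}

theorem fst_eq_zero_of_lt_zero_of_eq_smul (heig : transferFun m ε N a = lam • a)
    (hlam : lam ≠ 0) {j : ℤ} (hj : j < 0) : (a j).1 = 0 := by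
  have h := congrArg Prod.fst (congrFun heig j)
  simp only [transferFun, Pi.smul_apply, Prod.smul_fst, smul_eq_mul] at h
  rw [if_neg (by omega)] at h
  exact (mul_eq_zero.mp h.symm).resolve_left hlam

theorem snd_eq_zero_of_lt_two_of_eq_smul (heig : transferFun m ε N a = lam • a)
    (hlam : lam ≠ 0) {j : ℤ} (hj : j < 2) : (a j).2 = 0 := by
  have h := congrArg Prod.snd (congrFun heig j)
  simp only [transferFun, Pi.smul_apply, Prod.smul_snd, smul_eq_mul] at h
  rw [if_neg (by omega)] at h
  exact (mul_eq_zero.mp h.symm).resolve_left hlam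

theorem snd_add_one_eq_zero_of_eq_smul (heig : transferFun m ε N a = lam • a)
    (hlam : lam ≠ 0) {j : ℤ} (hj : a j = 0) : (a (j + 1)).2 = 0 := by
  have h := congrArg Prod.snd (congrFun heig (j + 1))
  simp only [transferFun, Pi.smul_apply, Prod.smul_snd, smul_eq_mul, add_sub_cancel_right,
    hj, Prod.fst_zero, Prod.snd_zero, mul_zero, add_zero, ite_self] at h
  exact (mul_eq_zero.mp h.symm).resolve_left hlam

theorem fst_add_one_eq_zero_of_eq_smul (heig : transferFun m ε N a = lam • a)
    (hlam : lam ≠ 0) {j : ℤ} (hj : 0 ≤ j) (hfst : (a j).1 = 0)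
    (hsnd : (a (j + 1)).2 = 0) : (a (j + 1)).1 = 0 := by
  by_cases hjN : j ≤ N - 1
  · have h := congrArg Prod.fst (congrFun heig j)
    simp only [transferFun, Pi.smul_apply, Prod.smul_fst, smul_eq_mul, hfst, hsnd, mul_zero,
      sub_zero] at h
    rw [if_pos ⟨hj, hjN⟩] at h
    exact (mul_eq_zero.mp h).resolve_left
      (one_div_ne_zero (one_add_I_mul_mul_ne_zero m ε))
  · have h := congrArg Prod.fst (congrFun heig (j + 1))
    simp only [transferFun, Pi.smul_apply, Prod.smul_fst, smul_eq_mul] at h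
    rw [if_neg (by omega)] at h
    exact (mul_eq_zero.mp h.symm).resolve_left hlam

end transferFun

open transferFun in
theorem eigenvector_with_vanishing_first_component_is_zero_general (m ε : ℝ)
    (N : ℤ) (lam : ℂ) (hlam : lam ≠ 0)
    (a : ℤ → ℂ × ℂ) (heig : transferFun m ε N a = lam • a)
    (h0 : (a 0).1 = 0) :
    a = 0 := by
  funext j
  rcases lt_or_ge j 0 with hj | hj
  · exact Prod.ext (fst_eq_zero_of_lt_zero_of_eq_smul heig hlam hj)
      (snd_eq_zero_of_lt_two_of_eq_smul heig hlam (by omega))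
  induction j, hj using Int.leInduction with
  | base => exact Prod.ext h0 (snd_eq_zero_of_lt_two_of_eq_smul heig hlam (by norm_num))
  | succ j hj ih =>
    have hsnd := snd_add_one_eq_zero_of_eq_smul heig hlam ih
    exact Prod.ext (fst_add_one_eq_zero_of_eq_smul heig hlam hj (congrArg Prod.fst ih) hsnd) hsnd

/-- If `T(a°) = λ·a°` with `λ ≠ 0` and `a°₋(0) = 0`, then `a° = 0`;
in particular no eigenvector of `T` with a nonzero eigenvalue has `a°₋(0) = 0`. -/
theorem eigenvector_with_vanishing_first_component_is_zero (ω m L ε : ℝ)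
    (hω : 0 < ω) (hm : 0 < m) (hL : 0 < L) (hε : 0 < ε) (hmε : m * ε < 1)
    (N : ℤ) (hN : L = N * ε) (lam : ℂ) (hlam : lam ≠ 0)
    (a : ℤ → ℂ × ℂ) (ha : InV N a) (heig : transferFun m ε N a = lam • a)
    (h0 : (a 0).1 = 0) :
    a = 0 :=
  eigenvector_with_vanishing_first_component_is_zero_general m ε N lam hlam a heig h0
end
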